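/- arXiv:1604.02063 — 2 statements merged into one kernel-verified Lean document; each statement's English description precedes it below -/
import Mathlib

section
/- In the homogeneous universal enveloping algebra U_h(sl₂), for all natural numbers a, b the normal-ordering identity (y^a/a!)(x^b/b!) = ∑_{k=0}^{a} (2b)^k · (x^b/b!) · (y^{a-k}/(a-k)!) · (h^k/k!) holds. -/
/-! Since `h` is central, the relation `yx = x(y + 2h)` iterates to `y^a x^b = x^b (y + 2bh)^a`.
Expanding `(2bh + y)^a / a!` by the binomial theorem for the commuting elements `2bh` and `y`
gives the sum of divided powers. -/

namespace UhSl2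

/-- Generators of `U_h(sl₂)`. -/
inductive Gen : Type | x | y | z | h

variable (K : Type*) [Field K]

open FreeAlgebra in
/-- Defining relations of `U_h(sl₂)`: `h` is central, `yx = xy + 2xh`,
`zx = xz - yh`, `zy = yz + 2zh`. -/
inductive Rel : FreeAlgebra K Gen → FreeAlgebra K Gen → Prop
  | yx : Rel (ι K Gen.y * ι K Gen.x) (ι K Gen.x * ι K Gen.y + 2 * (ι K Gen.x * ι K Gen.h))
  | zx : Rel (ι K Gen.z * ι K Gen.x) (ι K Gen.x * ι K Gen.z - ι K Gen.y * ι K Gen.h)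
  | zy : Rel (ι K Gen.z * ι K Gen.y) (ι K Gen.y * ι K Gen.z + 2 * (ι K Gen.z * ι K Gen.h))
  | hx : Rel (ι K Gen.h * ι K Gen.x) (ι K Gen.x * ι K Gen.h)
  | hy : Rel (ι K Gen.h * ι K Gen.y) (ι K Gen.y * ι K Gen.h)
  | hz : Rel (ι K Gen.h * ι K Gen.z) (ι K Gen.z * ι K Gen.h)

/-- The homogeneous universal enveloping algebra `U_h(sl₂)`. -/
abbrev Uh := RingQuot (Rel K)

noncomputable def X : Uh K := RingQuot.mkAlgHom K (Rel K) (FreeAlgebra.ι K Gen.x)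
noncomputable def Y : Uh K := RingQuot.mkAlgHom K (Rel K) (FreeAlgebra.ι K Gen.y)
noncomputable def Z : Uh K := RingQuot.mkAlgHom K (Rel K) (FreeAlgebra.ι K Gen.z)
noncomputable def H : Uh K := RingQuot.mkAlgHom K (Rel K) (FreeAlgebra.ι K Gen.h)

/-- Divided power `u^n / n!`. -/
noncomputable def dp (n : ℕ) (u : Uh K) : Uh K := (n.factorial : K)⁻¹ • u ^ n

end UhSl2

section Semiring

open Finset

variable {A : Type*} [Semiring A]

theorem mul_pow_eq_pow_mul_add_nsmul {x y d : A} (hxd : Commute x d)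
    (hyx : y * x = x * (y + d)) (n : ℕ) : y * x ^ n = x ^ n * (y + n • d) := by
  induction n with
  | zero => simp
  | succ n ih =>
    calc y * x ^ (n + 1) = x ^ n * (y * x + n • (d * x)) := by
          rw [pow_succ, ← mul_assoc, ih, mul_assoc, add_mul, smul_mul_assoc]
      _ = x ^ (n + 1) * (y + (n + 1) • d) := by
          rw [hyx, ← hxd.eq, ← mul_smul_comm, ← mul_add, ← mul_assoc, ← pow_succ, succ_nsmul,
            add_assoc, add_comm d]

theorem pow_mul_pow_eq_pow_mul_add_nsmul_pow {x y d : A} (hxd : Commute x d)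
    (hyx : y * x = x * (y + d)) (m n : ℕ) :
    y ^ m * x ^ n = x ^ n * (y + n • d) ^ m := by
  induction m with
  | zero => simp
  | succ m ih =>
    rw [pow_succ', mul_assoc, ih, ← mul_assoc, mul_pow_eq_pow_mul_add_nsmul hxd hyx, mul_assoc,
      ← pow_succ']

theorem Commute.inv_factorial_smul_add_pow {K : Type*} [Field K] [CharZero K] [Algebra K A]
    {u v : A} (h : Commute u v) (n : ℕ) :
    (n.factorial : K)⁻¹ • (u + v) ^ n =
      ∑ k ∈ range (n + 1),
        ((k.factorial : K)⁻¹ • u ^ k) * (((n - k).factorial : K)⁻¹ • v ^ (n - k)) := by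
  rw [h.add_pow, smul_sum]
  refine sum_congr rfl fun k hk => ?_
  rw [← nsmul_eq_mul', ← Nat.cast_smul_eq_nsmul K, smul_smul, smul_mul_smul_comm,
    Nat.cast_choose K (Nat.lt_succ_iff.mp (mem_range.mp hk))]
  congr 1
  have := n.factorial_ne_zero
  field_simp

end Semiring

namespace UhSl2

variable (K : Type*) [Field K]

theorem commute_X_H : Commute (X K) (H K) :=
  Eq.symm <| by simpa [X, H] using RingQuot.mkAlgHom_rel K (Rel.hx (K := K))

theorem commute_H_Y : Commute (H K) (Y K) := by
  simpa [Y, H, Commute, SemiconjBy] using RingQuot.mkAlgHom_rel K (Rel.hy (K := K))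

theorem Y_mul_X : Y K * X K = X K * (Y K + (2 : K) • H K) := by
  have := RingQuot.mkAlgHom_rel K (Rel.yx (K := K))
  simp only [map_add, map_mul, map_ofNat] at this
  rw [X, Y, H, this, mul_add, mul_smul_comm, Algebra.smul_def, map_ofNat]

theorem Y_pow_mul_X_pow (a b : ℕ) :
    Y K ^ a * X K ^ b = X K ^ b * ((2 * b : K) • H K + Y K) ^ a := by
  rw [pow_mul_pow_eq_pow_mul_add_nsmul_pow ((commute_X_H K).smul_right (2 : K)) (Y_mul_X K),
    add_comm, ← Nat.cast_smul_eq_nsmul K, smul_smul, mul_comm]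

theorem dp_smul (n : ℕ) (c : K) (u : Uh K) : dp K n (c • u) = c ^ n • dp K n u := by
  rw [dp, dp, smul_pow, smul_comm]

theorem commute_dp {u v : Uh K} (h : Commute u v) (m n : ℕ) : Commute (dp K m u) (dp K n v) :=
  ((h.pow_pow m n).smul_left _).smul_right _

end UhSl2

open UhSl2

/-- In `U_h(sl₂)`: `(y^a/a!)(x^b/b!) = ∑_{k=0}^{a} (2b)^k (x^b/b!)(y^{a-k}/(a-k)!)(h^k/k!)`. -/
theorem yx_normal_order (K : Type*) [Field K] [CharZero K] (a b : ℕ) :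
    dp K a (Y K) * dp K b (X K) =
      ∑ k ∈ Finset.range (a + 1),
        ((2 * (b : K)) ^ k) • (dp K b (X K) * dp K (a - k) (Y K) * dp K k (H K)) := by
  set c : K := 2 * b
  calc dp K a (Y K) * dp K b (X K) = dp K b (X K) * dp K a (c • H K + Y K) := by
        rw [dp, dp, dp, smul_mul_smul_comm, Y_pow_mul_X_pow, smul_mul_smul_comm, mul_comm]
    _ = _ := by
        rw [dp.eq_def K a, ((commute_H_Y K).smul_left c).inv_factorial_smul_add_pow,
          Finset.mul_sum]
        refine Finset.sum_congr rfl fun k _ => ?_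
        change dp K b (X K) * (dp K k (c • H K) * dp K (a - k) (Y K)) = _
        rw [dp_smul, smul_mul_assoc, mul_smul_comm, (commute_dp K (commute_H_Y K) _ _).eq,
          mul_assoc]
end

section
/- In U_h(sl₂), the identity (z²/2!)·(x²/2!) = (x²/2!)(z²/2!) - x·y·z·h - 4·x·z·(h²/2!) + 2·(y²/2!)(h²/2!) + 3·y·(h³/3!) holds, where all monomials on the right are written in the normal order x < y < z < h. -/
namespace UhSl2

variable (K : Type*) [Field K]

section Lemmas
variable (K : Type*) [Field K]

lemma yx : Y K * X K = X K * Y K + 2 * (X K * H K) := by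
  simpa [X, Y, H, map_mul, map_add, map_ofNat] using RingQuot.mkAlgHom_rel K (Rel.yx (K := K))

lemma zx : Z K * X K = X K * Z K - Y K * H K := by
  simpa [X, Y, Z, H, map_mul, map_sub] using RingQuot.mkAlgHom_rel K (Rel.zx (K := K))

lemma zy : Z K * Y K = Y K * Z K + 2 * (Z K * H K) := by
  simpa [Y, Z, H, map_mul, map_add, map_ofNat] using RingQuot.mkAlgHom_rel K (Rel.zy (K := K))

lemma hx : H K * X K = X K * H K := by
  simpa [X, H, map_mul] using RingQuot.mkAlgHom_rel K (Rel.hx (K := K))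

lemma hy : H K * Y K = Y K * H K := by
  simpa [Y, H, map_mul] using RingQuot.mkAlgHom_rel K (Rel.hy (K := K))

lemma hz : H K * Z K = Z K * H K := by
  simpa [Z, H, map_mul] using RingQuot.mkAlgHom_rel K (Rel.hz (K := K))

lemma yx' (a : Uh K) : Y K * (X K * a) = X K * (Y K * a) + 2 * (X K * (H K * a)) := by
  rw [← mul_assoc, yx]; noncomm_ring

lemma zx' (a : Uh K) : Z K * (X K * a) = X K * (Z K * a) - Y K * (H K * a) := by
  rw [← mul_assoc, zx]; simp [sub_mul, mul_assoc]

lemma zy' (a : Uh K) : Z K * (Y K * a) = Y K * (Z K * a) + 2 * (Z K * (H K * a)) := by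
  rw [← mul_assoc, zy]; noncomm_ring

lemma hx' (a : Uh K) : H K * (X K * a) = X K * (H K * a) := by
  rw [← mul_assoc, hx, mul_assoc]

lemma hy' (a : Uh K) : H K * (Y K * a) = Y K * (H K * a) := by
  rw [← mul_assoc, hy, mul_assoc]

lemma hz' (a : Uh K) : H K * (Z K * a) = Z K * (H K * a) := by
  rw [← mul_assoc, hz, mul_assoc]

lemma core0 : Z K ^ 2 * X K ^ 2 =
    X K ^ 2 * Z K ^ 2 - 4 * (X K * Y K * Z K * H K) - 8 * (X K * Z K * H K ^ 2)
      + 2 * (Y K ^ 2 * H K ^ 2) + 2 * (Y K * H K ^ 3) := by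
  noncomm_ring [yx K, zx K, zy K, hx K, hy K, hz K,
    yx' K, zx' K, zy' K, hx' K, hy' K, hz' K]

lemma core : Z K ^ 2 * X K ^ 2 =
    X K ^ 2 * Z K ^ 2 - (4:K) • (X K * Y K * Z K * H K) - (8:K) • (X K * Z K * H K ^ 2)
      + (2:K) • (Y K ^ 2 * H K ^ 2) + (2:K) • (Y K * H K ^ 3) := by
  have e : ∀ (n : ℕ) [n.AtLeastTwo] (u : Uh K), (OfNat.ofNat n : K) • u = OfNat.ofNat n * u :=
    fun n _ u => by rw [Algebra.smul_def, map_ofNat]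
  rw [e, e, e, e]
  exact core0 K

end Lemmas

end UhSl2

open UhSl2
/-- In `U_h(sl₂)`:
`(z²/2!)(x²/2!) = (x²/2!)(z²/2!) - xyzh - 4xz(h²/2!) + 2(y²/2!)(h²/2!) + 3y(h³/3!)`. -/
theorem dp_two_z_mul_dp_two_x (K : Type*) [Field K] [CharZero K] :
    dp K 2 (Z K) * dp K 2 (X K) =
      dp K 2 (X K) * dp K 2 (Z K) - X K * Y K * Z K * H K -
        (4 : K) • (X K * Z K * dp K 2 (H K)) +
        (2 : K) • (dp K 2 (Y K) * dp K 2 (H K)) +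
        (3 : K) • (Y K * dp K 3 (H K)) := by
  have h2 : ((2:ℕ).factorial : K) = 2 := by norm_num [Nat.factorial]
  have h3 : ((3:ℕ).factorial : K) = 6 := by norm_num [Nat.factorial]
  simp only [dp, h2, h3]
  rw [smul_mul_smul_comm, smul_mul_smul_comm, smul_mul_smul_comm, core]
  simp only [mul_smul_comm, smul_mul_assoc, smul_smul]
  match_scalars <;> norm_num
end
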